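/- (Stretch-3 guarantee) Let e=(a,b) be a failing edge of an SPT T of a 2-edge-connected positively weighted graph G, and let g be the swap edge for e that lies on a shortest path in G−e from s to b. Then for every vertex u in the detached subtree T_b, d_{T_{e/g}}(s,u) ≤ 3·d_{G−e}(s,u); hence μ(g) ≤ 3 and λ(g) ≤ 3, and in particular a best swap edge f for either criterion satisfies μ(f) ≤ 3 and λ(f) ≤ 3. -/

import Mathlib

open SimpleGraph

/-- The weighted length of a walk. -/
noncomputable def wlen {V : Type*} (W : V → V → ℝ) {G : SimpleGraph V} {u v : V}
    (p : G.Walk u v) : ℝ :=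
  (p.darts.map (fun d => W d.toProd.1 d.toProd.2)).sum

/-- The weighted distance between two vertices of a graph: the infimum of the
weighted lengths of all walks joining them. -/
noncomputable def wdist {V : Type*} (W : V → V → ℝ) (G : SimpleGraph V) (u v : V) : ℝ :=
  sInf {x : ℝ | ∃ p : G.Walk u v, x = wlen W p}

/-- `(x, y)` is a swap edge for the failing tree edge `e = (a,b)` (with `b` the child):
a non-tree edge of `G` whose endpoint `x` lies in the component of `T − e` containing the
source and whose endpoint `y` lies in the detached component, i.e. the one containing `b`. -/
def swapEdge {V : Type*} (T G : SimpleGraph V) (a b x y : V) : Prop :=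
  G.Adj x y ∧ s(x, y) ∉ T.edgeSet ∧
    ¬ (T.deleteEdges {s(a, b)}).Reachable b x ∧
    (T.deleteEdges {s(a, b)}).Reachable b y

/-- The max-stretch `μ` of a swap edge `(x, y)` for the failing edge `e = (a,b)`:
the supremum over the vertices `u` of the detached subtree `T_b` of
`d_{T_{e/f}}(s,u) / d_{G−e}(s,u)`, where `d_{T_{e/f}}(s,u) = d_T(s,x) + w(x,y) + d_T(y,u)`. -/
noncomputable def muSt {V : Type*} (W : V → V → ℝ) (T G : SimpleGraph V)
    (s a b x y : V) : ℝ :=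
  sSup {r : ℝ | ∃ u : V, (T.deleteEdges {s(a, b)}).Reachable b u ∧
    r = (wdist W T s x + W x y + wdist W T y u) /
        wdist W (G.deleteEdges {s(a, b)}) s u}

/-- The average stretch `λ` of a swap edge `(x, y)` for `e = (a,b)`, where `U` is the
vertex set of the detached subtree `T_b`. -/
noncomputable def lamSt {V : Type*} [Fintype V] (W : V → V → ℝ) (T G : SimpleGraph V)
    (s a b : V) (U : Finset V) (x y : V) : ℝ :=
  (∑ u ∈ U, (wdist W T s x + W x y + wdist W T y u) /
      wdist W (G.deleteEdges {s(a, b)}) s u) / U.card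

/-!
Since `g = (x,b)` lies on a shortest `s`–`b` path of `G − e`, the swapped tree reaches
`u ∈ T_b` at distance `d_{G−e}(s,b) + d_T(b,u)`. The triangle inequality through `u` bounds
`d_{G−e}(s,b)` by `d_{G−e}(s,u) + d_{T−e}(u,b)`, and since `e` is a bridge of `T`, every
`s`–`u` walk in `T` has to enter `T_b` through `b`, so `d_{T−e}(b,u) ≤ d_T(s,u)`. As `T` is a
shortest-path tree, `d_T(s,u) = d_G(s,u) ≤ d_{G−e}(s,u)`, which gives the factor `3`.
Both `μ(g)` and `λ(g)` are a maximum resp. an average of ratios bounded by `3`, and a best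
swap edge is no worse than `g`.
-/

section WeightedDistance

variable {V : Type*} {W : V → V → ℝ} {H K : SimpleGraph V} {u v w : V}

@[simp]
lemma wlen_nil : wlen W (Walk.nil : H.Walk u u) = 0 := rfl

@[simp]
lemma wlen_cons (h : H.Adj u v) (p : H.Walk v w) :
    wlen W (Walk.cons h p) = W u v + wlen W p := by
  simp [wlen]

lemma wlen_append (p : H.Walk u v) (q : H.Walk v w) :
    wlen W (p.append q) = wlen W p + wlen W q := by
  simp [wlen]

lemma wlen_reverse (hW : ∀ v w, W v w = W w v) (p : H.Walk u v) :
    wlen W p.reverse = wlen W p := by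
  induction p with
  | nil => rfl
  | cons h q ih => simp [wlen_append, ih, hW, add_comm]

lemma wlen_nonneg (hW : ∀ v w, H.Adj v w → 0 ≤ W v w) (p : H.Walk u v) :
    0 ≤ wlen W p := by
  induction p with
  | nil => simp
  | cons h q ih => simpa using add_nonneg (hW _ _ h) ih

lemma wdist_nonneg (hW : ∀ v w, H.Adj v w → 0 ≤ W v w) : 0 ≤ wdist W H u v :=
  Real.sInf_nonneg (by rintro _ ⟨p, rfl⟩; exact wlen_nonneg hW p)

lemma wdist_le_wlen (hW : ∀ v w, H.Adj v w → 0 ≤ W v w) (p : H.Walk u v) :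
    wdist W H u v ≤ wlen W p :=
  csInf_le ⟨0, by rintro _ ⟨q, rfl⟩; exact wlen_nonneg hW q⟩ ⟨p, rfl⟩

lemma le_wdist (huv : H.Reachable u v) {c : ℝ} (h : ∀ p : H.Walk u v, c ≤ wlen W p) :
    c ≤ wdist W H u v := by
  obtain ⟨p⟩ := huv
  exact le_csInf ⟨wlen W p, p, rfl⟩ (by rintro _ ⟨q, rfl⟩; exact h q)

lemma wdist_self (hW : ∀ v w, H.Adj v w → 0 ≤ W v w) : wdist W H u u = 0 :=
  le_antisymm (by simpa using wdist_le_wlen hW (Walk.nil : H.Walk u u)) (wdist_nonneg hW)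

lemma wdist_le_of_adj (hW : ∀ v w, H.Adj v w → 0 ≤ W v w) (h : H.Adj u v) :
    wdist W H u v ≤ W u v := by
  simpa using wdist_le_wlen hW h.toWalk

lemma wdist_comm (hW : ∀ v w, W v w = W w v) : wdist W H u v = wdist W H v u := by
  have hrev : ∀ a b, {x | ∃ p : H.Walk a b, x = wlen W p} ⊆ {x | ∃ p : H.Walk b a, x = wlen W p} :=
    fun _ _ _ ⟨p, hp⟩ => ⟨p.reverse, hp.trans (wlen_reverse hW p).symm⟩
  exact congrArg sInf ((hrev u v).antisymm (hrev v u))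

lemma wdist_triangle (hW : ∀ v w, H.Adj v w → 0 ≤ W v w)
    (huv : H.Reachable u v) (hvw : H.Reachable v w) :
    wdist W H u w ≤ wdist W H u v + wdist W H v w := by
  rw [← sub_le_iff_le_add]
  refine le_wdist huv fun p => ?_
  rw [sub_le_iff_le_add', ← sub_le_iff_le_add]
  refine le_wdist hvw fun q => ?_
  rw [sub_le_iff_le_add', ← wlen_append]
  exact wdist_le_wlen hW _

lemma wdist_map_le_wdist (hW : ∀ v w, K.Adj v w → 0 ≤ W v w) (f : V → V)
    (hf : ∀ v w, H.Adj v w → K.Reachable (f v) (f w) ∧ wdist W K (f v) (f w) ≤ W v w)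
    (huv : H.Reachable u v) : wdist W K (f u) (f v) ≤ wdist W H u v := by
  have hwalk : ∀ {u v} (p : H.Walk u v),
      K.Reachable (f u) (f v) ∧ wdist W K (f u) (f v) ≤ wlen W p := by
    intro u v p
    induction p with
    | nil => exact ⟨.refl _, by simp [wdist_self hW]⟩
    | cons h q ih =>
      obtain ⟨hreach, hdist⟩ := hf _ _ h
      refine ⟨hreach.trans ih.1, ?_⟩
      calc wdist W K (f _) (f _) ≤ wdist W K (f _) (f _) + wdist W K (f _) (f _) :=
            wdist_triangle hW hreach ih.1
        _ ≤ _ := by simpa using add_le_add hdist ih.2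
  exact le_wdist huv fun p => (hwalk p).2

lemma wdist_anti (hW : ∀ v w, K.Adj v w → 0 ≤ W v w) (hHK : H ≤ K) (huv : H.Reachable u v) :
    wdist W K u v ≤ wdist W H u v :=
  wdist_map_le_wdist hW id
    (fun _ _ h => ⟨(hHK h).reachable, wdist_le_of_adj hW (hHK h)⟩) huv

end WeightedDistance

section Bridge

variable {V : Type*} {W : V → V → ℝ} {H : SimpleGraph V} {a b u v w : V}

lemma eq_of_adj_of_reachable_deleteEdges (hvw : H.Adj v w)
    (hv : (H.deleteEdges {s(a, b)}).Reachable b v)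
    (hw : ¬ (H.deleteEdges {s(a, b)}).Reachable b w) : v = b := by
  by_cases he : s(v, w) = s(a, b)
  · rcases Sym2.eq_iff.mp he with ⟨-, rfl⟩ | ⟨rfl, -⟩
    · exact absurd .rfl hw
    · rfl
  · exact absurd (hv.trans (deleteEdges_adj.mpr ⟨hvw, he⟩).reachable) hw

lemma deleteEdges_adj_of_isBridge (hab : H.IsBridge s(a, b)) (hvw : H.Adj v w)
    (hv : (H.deleteEdges {s(a, b)}).Reachable b v)
    (hw : (H.deleteEdges {s(a, b)}).Reachable b w) :
    (H.deleteEdges {s(a, b)}).Adj v w := by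
  refine deleteEdges_adj.mpr ⟨hvw, fun he => isBridge_iff.mp hab ?_⟩
  rcases Sym2.eq_iff.mp he with ⟨rfl, rfl⟩ | ⟨rfl, rfl⟩
  · exact hv.symm
  · exact hw.symm

lemma wdist_deleteEdges_le_of_isBridge (hW : ∀ v w, H.Adj v w → 0 ≤ W v w)
    (hab : H.IsBridge s(a, b)) (hv : ¬ (H.deleteEdges {s(a, b)}).Reachable b v)
    (hu : (H.deleteEdges {s(a, b)}).Reachable b u) (hvu : H.Reachable v u) :
    wdist W (H.deleteEdges {s(a, b)}) b u ≤ wdist W H v u := by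
  classical
  set K := H.deleteEdges {s(a, b)}
  have hWK : ∀ v w, K.Adj v w → 0 ≤ W v w := fun v w h => hW v w (deleteEdges_le _ h)
  -- `r` retracts onto the component of `b`; it is 1-Lipschitz along the edges of `H`
  -- because `s(a, b)` is a bridge.
  let r : V → V := fun v => if K.Reachable b v then v else b
  have hr : ∀ v, K.Reachable b (r v) := fun v => by
    by_cases h : K.Reachable b v <;> simp [r, h]
  have hrb : ∀ {v w}, H.Adj v w → ¬ K.Reachable b w → r v = b := fun {v w} hvw hw => by
    by_cases h : K.Reachable b v
    · simpa [r, h] using eq_of_adj_of_reachable_deleteEdges hvw h hw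
    · simp [r, h]
  have hlip : ∀ v w, H.Adj v w → K.Reachable (r v) (r w) ∧ wdist W K (r v) (r w) ≤ W v w := by
    intro v w hvw
    refine ⟨(hr v).symm.trans (hr w), ?_⟩
    by_cases hv : K.Reachable b v
    · by_cases hw : K.Reachable b w
      · simpa [r, hv, hw] using wdist_le_of_adj hWK (deleteEdges_adj_of_isBridge hab hvw hv hw)
      · rw [hrb hvw hw, show r w = b by simp [r, hw], wdist_self hWK]
        exact hW v w hvw
    · rw [show r v = b by simp [r, hv], hrb hvw.symm hv, wdist_self hWK]
      exact hW v w hvw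
  simpa [r, hv, hu] using wdist_map_le_wdist hWK r hlip hvu

end Bridge

section Stretch

variable {V : Type*} {W : V → V → ℝ} {G T : SimpleGraph V} {s a b x y u : V}

lemma swap_dist_le_three_mul (hW : ∀ v w, G.Adj v w → 0 ≤ W v w)
    (hWsymm : ∀ v w, W v w = W w v) (hTG : T ≤ G) (hT : T.IsTree)
    (hSPT : wdist W T s u = wdist W G s u)
    (hGe : (G.deleteEdges {s(a, b)}).Connected) (he : s(a, b) ∈ T.edgeSet)
    (hb : ¬ (T.deleteEdges {s(a, b)}).Reachable s b)
    (hshort : wdist W T s x + W x b = wdist W (G.deleteEdges {s(a, b)}) s b)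
    (hu : (T.deleteEdges {s(a, b)}).Reachable b u) :
    wdist W T s x + W x b + wdist W T b u ≤ 3 * wdist W (G.deleteEdges {s(a, b)}) s u := by
  have hWT : ∀ v w, T.Adj v w → 0 ≤ W v w := fun v w h => hW v w (hTG h)
  have hWGe : ∀ v w, (G.deleteEdges {s(a, b)}).Adj v w → 0 ≤ W v w :=
    fun v w h => hW v w (deleteEdges_le _ h)
  have hsu : wdist W T s u ≤ wdist W (G.deleteEdges {s(a, b)}) s u :=
    hSPT ▸ wdist_anti hW (deleteEdges_le _) (hGe.preconnected s u)
  have hbu : wdist W (T.deleteEdges {s(a, b)}) b u ≤ wdist W T s u :=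
    wdist_deleteEdges_le_of_isBridge hWT (isAcyclic_iff_forall_isBridge.mp hT.isAcyclic he)
      (fun h => hb h.symm) hu (hT.connected.preconnected s u)
  calc wdist W T s x + W x b + wdist W T b u
      = wdist W (G.deleteEdges {s(a, b)}) s b + wdist W T b u := by rw [hshort]
    _ ≤ wdist W (G.deleteEdges {s(a, b)}) s u + wdist W (G.deleteEdges {s(a, b)}) b u
          + wdist W (T.deleteEdges {s(a, b)}) b u := by
        rw [wdist_comm (H := G.deleteEdges _) hWsymm (u := b)]
        gcongr
        · exact wdist_triangle hWGe (hGe.preconnected s u) (hGe.preconnected u b)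
        · exact wdist_anti hWT (deleteEdges_le _) hu
    _ ≤ wdist W (G.deleteEdges {s(a, b)}) s u + 2 * wdist W (T.deleteEdges {s(a, b)}) b u := by
        linarith [wdist_anti hWGe (deleteEdges_mono hTG) hu]
    _ ≤ 3 * wdist W (G.deleteEdges {s(a, b)}) s u := by linarith

lemma muSt_le {c : ℝ} (hc : 0 ≤ c)
    (h : ∀ u, (T.deleteEdges {s(a, b)}).Reachable b u →
      (wdist W T s x + W x y + wdist W T y u) / wdist W (G.deleteEdges {s(a, b)}) s u ≤ c) :
    muSt W T G s a b x y ≤ c :=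
  Real.sSup_le (by rintro _ ⟨u, hu, rfl⟩; exact h u hu) hc

lemma lamSt_le [Fintype V] {U : Finset V} {c : ℝ} (hc : 0 ≤ c)
    (h : ∀ u ∈ U,
      (wdist W T s x + W x y + wdist W T y u) / wdist W (G.deleteEdges {s(a, b)}) s u ≤ c) :
    lamSt W T G s a b U x y ≤ c := by
  refine div_le_of_le_mul₀ (Nat.cast_nonneg _) hc ?_
  simpa [mul_comm] using Finset.sum_le_card_nsmul U _ c h

end Stretch

theorem stretch_three_guarantee_general {V : Type*} [Fintype V]
    (G T : SimpleGraph V) (W : V → V → ℝ) (s a b : V)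
    (hWpos : ∀ u w : V, G.Adj u w → 0 < W u w)
    (hWsymm : ∀ u w : V, W u w = W w u)
    (h2ec : ∀ e' ∈ G.edgeSet, (G.deleteEdges {e'}).Connected)
    (hTG : T ≤ G) (hT : T.IsTree)
    (hSPT : ∀ u : V, wdist W T s u = wdist W G s u)
    (he : s(a, b) ∈ T.edgeSet)
    (hb : ¬ (T.deleteEdges {s(a, b)}).Reachable s b)
    (U : Finset V)
    (hU : ∀ u : V, u ∈ U ↔ (T.deleteEdges {s(a, b)}).Reachable b u)
    (x : V) (hg : swapEdge T G a b x b)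
    (hshort : wdist W T s x + W x b =
      wdist W (G.deleteEdges {s(a, b)}) s b) :
    (∀ u ∈ U, wdist W T s x + W x b + wdist W T b u ≤
        3 * wdist W (G.deleteEdges {s(a, b)}) s u) ∧
      muSt W T G s a b x b ≤ 3 ∧
      lamSt W T G s a b U x b ≤ 3 ∧
      (∀ xf yf : V, swapEdge T G a b xf yf →
        (∀ x' y' : V, swapEdge T G a b x' y' →
          muSt W T G s a b xf yf ≤ muSt W T G s a b x' y') →
        muSt W T G s a b xf yf ≤ 3) ∧
      (∀ xf yf : V, swapEdge T G a b xf yf →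
        (∀ x' y' : V, swapEdge T G a b x' y' →
          lamSt W T G s a b U xf yf ≤ lamSt W T G s a b U x' y') →
        lamSt W T G s a b U xf yf ≤ 3) := by
  have hW : ∀ u w, G.Adj u w → 0 ≤ W u w := fun u w h => (hWpos u w h).le
  have hGe := h2ec _ (edgeSet_mono hTG he)
  have hstretch : ∀ u, (T.deleteEdges {s(a, b)}).Reachable b u →
      wdist W T s x + W x b + wdist W T b u ≤ 3 * wdist W (G.deleteEdges {s(a, b)}) s u :=
    fun u hu => swap_dist_le_three_mul hW hWsymm hTG hT (hSPT u) hGe he hb hshort hu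
  have hratio : ∀ u, (T.deleteEdges {s(a, b)}).Reachable b u →
      (wdist W T s x + W x b + wdist W T b u) / wdist W (G.deleteEdges {s(a, b)}) s u ≤ 3 :=
    fun u hu => div_le_of_le_mul₀
      (wdist_nonneg fun v w h => hW v w (deleteEdges_le _ h)) (by norm_num) (hstretch u hu)
  have hmu : muSt W T G s a b x b ≤ 3 := muSt_le (by norm_num) hratio
  have hlam : lamSt W T G s a b U x b ≤ 3 :=
    lamSt_le (by norm_num) fun u hu => hratio u ((hU u).mp hu)
  exact ⟨fun u hu => hstretch u ((hU u).mp hu), hmu, hlam,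
    fun _ _ _ hbest => (hbest x b hg).trans hmu, fun _ _ _ hbest => (hbest x b hg).trans hlam⟩

/-- Stretch-3 guarantee.  Let `e = (a,b)` be a failing edge of an SPT `T` of a
2-edge-connected positively weighted graph `G`, and let `g = (x,b)` be the swap edge for
`e` lying on a shortest path in `G−e` from `s` to `b` (so that
`d_T(s,x) + w(g) = d_{G−e}(s,b)`).  Then for every vertex `u` of the detached subtree
`T_b`, `d_{T_{e/g}}(s,u) ≤ 3·d_{G−e}(s,u)`; hence `μ(g) ≤ 3` and `λ(g) ≤ 3`, and in
particular a best swap edge for either criterion satisfies `μ ≤ 3` (resp. `λ ≤ 3`). -/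
theorem stretch_three_guarantee {V : Type*} [Fintype V]
    (G T : SimpleGraph V) (W : V → V → ℝ) (s a b : V)
    (hWpos : ∀ u w : V, G.Adj u w → 0 < W u w)
    (hWsymm : ∀ u w : V, W u w = W w u)
    (hGconn : G.Connected)
    (h2ec : ∀ e' ∈ G.edgeSet, (G.deleteEdges {e'}).Connected)
    (hTG : T ≤ G) (hT : T.IsTree)
    (hSPT : ∀ u : V, wdist W T s u = wdist W G s u)
    (he : s(a, b) ∈ T.edgeSet)
    (hb : ¬ (T.deleteEdges {s(a, b)}).Reachable s b)
    (U : Finset V)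
    (hU : ∀ u : V, u ∈ U ↔ (T.deleteEdges {s(a, b)}).Reachable b u)
    (x : V) (hg : swapEdge T G a b x b)
    (hshort : wdist W T s x + W x b =
      wdist W (G.deleteEdges {s(a, b)}) s b) :
    (∀ u ∈ U, wdist W T s x + W x b + wdist W T b u ≤
        3 * wdist W (G.deleteEdges {s(a, b)}) s u) ∧
      muSt W T G s a b x b ≤ 3 ∧
      lamSt W T G s a b U x b ≤ 3 ∧
      (∀ xf yf : V, swapEdge T G a b xf yf →
        (∀ x' y' : V, swapEdge T G a b x' y' →
          muSt W T G s a b xf yf ≤ muSt W T G s a b x' y') →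
        muSt W T G s a b xf yf ≤ 3) ∧
      (∀ xf yf : V, swapEdge T G a b xf yf →
        (∀ x' y' : V, swapEdge T G a b x' y' →
          lamSt W T G s a b U xf yf ≤ lamSt W T G s a b U x' y') →
        lamSt W T G s a b U xf yf ≤ 3) :=
  stretch_three_guarantee_general G T W s a b hWpos hWsymm h2ec hTG hT hSPT he hb U hU x hg hshort
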